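/- Under assumption A1, let x ∈ F_p⁰ and μ > 0 satisfy δ(x, μ) ≤ 1/2, and let z = (1/μ)X s(x,μ) where s(x,μ) is the projected dual solution attaining δ(x,μ). Suppose d̂ satisfies AX²Aᵀ d̂ = (1/μ)AX²c − Ax + ζ_x for some residual ζ_x ∈ ℝ^m, set λ_x = −Aᵀ(AAᵀ)⁻¹ζ_x, Δx̂ = −((1/μ)X²c − x) + X²Aᵀd̂ + λ_x, and x⁺ = x + Δx̂. Then x⁺ = X(2e − z + ψ_x), where ψ_x = XAᵀ(AX²Aᵀ)⁻¹ζ_x + X⁻¹λ_x, Ax⁺ = b, and δ(x⁺, μ) ≤ √2·δ(x, μ)² + (√(2n) + 1)·‖ψ_x‖. -/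

import Mathlib

open Matrix

noncomputable def enorm {ι : Type*} [Fintype ι] (v : ι → ℝ) : ℝ :=
  Real.sqrt (∑ i, (v i) ^ 2)

noncomputable def opNorm {ι κ : Type*} [Fintype ι] [Fintype κ]
    (M : Matrix ι κ ℝ) : ℝ :=
  sSup {r : ℝ | ∃ v : κ → ℝ, _root_.enorm v ≤ 1 ∧ r = _root_.enorm (M *ᵥ v)}

noncomputable def lambdaMin {ι : Type*} [Fintype ι] (M : Matrix ι ι ℝ) : ℝ :=
  sInf {r : ℝ | ∃ v : ι → ℝ, _root_.enorm v = 1 ∧ r = v ⬝ᵥ (M *ᵥ v)}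

noncomputable def lambdaMax {ι : Type*} [Fintype ι] (M : Matrix ι ι ℝ) : ℝ :=
  sSup {r : ℝ | ∃ v : ι → ℝ, _root_.enorm v = 1 ∧ r = v ⬝ᵥ (M *ᵥ v)}

noncomputable def condNum {ι : Type*} [Fintype ι] (M : Matrix ι ι ℝ) : ℝ :=
  lambdaMax M / lambdaMin M

noncomputable def gradProj {m n : ℕ} (B : Matrix (Fin m) (Fin n) ℝ) :
    Matrix (Fin n) (Fin n) ℝ :=
  1 - Bᵀ * (B * Bᵀ)⁻¹ * B

/-- The proximity measure `δ(x, μ) = ‖P_{AX}((1/μ) X c - e)‖`. -/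
noncomputable def prox {m n : ℕ} (A : Matrix (Fin m) (Fin n) ℝ)
    (c x : Fin n → ℝ) (μ : ℝ) : ℝ :=
  enorm (gradProj (A * Matrix.diagonal x) *ᵥ (μ⁻¹ • (Matrix.diagonal x *ᵥ c) - 1))

/-- The proximity measure as `min_{(y,s) ∈ F_d} ‖(1/μ) X s - e‖`. -/
noncomputable def proxMin {m n : ℕ} (A : Matrix (Fin m) (Fin n) ℝ)
    (c x : Fin n → ℝ) (μ : ℝ) : ℝ :=
  sInf {r : ℝ | ∃ (y : Fin m → ℝ) (s : Fin n → ℝ),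
    Aᵀ *ᵥ y + s = c ∧ (∀ i, 0 ≤ s i) ∧
    r = _root_.enorm (μ⁻¹ • (Matrix.diagonal x *ᵥ s) - 1)}

/-- The primal normal matrix `A X² Aᵀ` is positive semidefinite. -/
theorem normalPSD {m n : ℕ} (A : Matrix (Fin m) (Fin n) ℝ) (x : Fin n → ℝ) :
    (A * Matrix.diagonal x ^ 2 * Aᵀ).PosSemidef := by
  have h : A * Matrix.diagonal x ^ 2 * Aᵀ
      = (A * Matrix.diagonal x) * (A * Matrix.diagonal x)ᴴ := by
    rw [Matrix.conjTranspose_mul, Matrix.conjTranspose_eq_transpose_of_trivial,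
      Matrix.conjTranspose_eq_transpose_of_trivial, Matrix.diagonal_transpose, pow_two,
      Matrix.mul_assoc, Matrix.mul_assoc, Matrix.mul_assoc]
  rw [h]
  exact Matrix.posSemidef_self_mul_conjTranspose _


/-!
Write `z = μ⁻¹ X s(x, μ)`. From `‖z - e‖ ≤ 1/2` we get `z > 0`, so `s(x, μ) > 0` and the
minimizer is interior: moving `(y, s)` along `(g, -Aᵀ g)` with `g = A X (z - e)` stays feasible for
small `|t|`, and first-order optimality forces `g = 0`. Then `μ⁻¹ y(x, μ)` solves the normal
equation exactly, so `d̂ = μ⁻¹ y + (A X² Aᵀ)⁻¹ ζ` and the step collapses to `x⁺ = X (2e - z + ψ)`.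
Keeping the same dual slack `s`, entrywise `μ⁻¹ x⁺ s - e = -(z - e)² + z ψ`, whose norm is at most
`‖z - e‖² + ‖z‖ ‖ψ‖` with `‖z‖ ≤ √n + 1/2`.
-/

open Filter Topology

section EuclideanNorm

variable {ι : Type*} [Fintype ι]

lemma enorm_eq_norm_toLp (v : ι → ℝ) : _root_.enorm v = ‖WithLp.toLp 2 v‖ := by
  simp [_root_.enorm, EuclideanSpace.norm_eq, sq_abs]

lemma enorm_nonneg (v : ι → ℝ) : 0 ≤ _root_.enorm v := Real.sqrt_nonneg _

lemma enorm_add_le' (u v : ι → ℝ) : _root_.enorm (u + v) ≤ _root_.enorm u + _root_.enorm v := by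
  simpa only [enorm_eq_norm_toLp, WithLp.toLp_add] using norm_add_le _ _

lemma abs_apply_le_enorm (v : ι → ℝ) (i : ι) : |v i| ≤ _root_.enorm v := by
  rw [← Real.sqrt_sq_eq_abs]
  exact Real.sqrt_le_sqrt (Finset.single_le_sum (fun j _ => sq_nonneg (v j)) (Finset.mem_univ i))

lemma enorm_one_eq_sqrt_card : _root_.enorm (1 : ι → ℝ) = √(Fintype.card ι) := by
  simp [_root_.enorm]

lemma enorm_mul_le (u v : ι → ℝ) : _root_.enorm (u * v) ≤ _root_.enorm u * _root_.enorm v := by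
  rw [_root_.enorm, _root_.enorm, _root_.enorm,
    ← Real.sqrt_mul (Finset.sum_nonneg fun _ _ => sq_nonneg _), Finset.sum_mul]
  refine Real.sqrt_le_sqrt (Finset.sum_le_sum fun i _ => ?_)
  rw [Pi.mul_apply, mul_pow]
  exact mul_le_mul_of_nonneg_left
    (Finset.single_le_sum (fun j _ => sq_nonneg (v j)) (Finset.mem_univ i)) (sq_nonneg _)

lemma dotProduct_eq_zero_of_isLocalMin_enorm_sub {v u : ι → ℝ}
    (h : IsLocalMin (fun t : ℝ => _root_.enorm (v - t • u)) 0) : v ⬝ᵥ u = 0 := by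
  have hsq : IsLocalMin (fun t : ℝ => ‖WithLp.toLp 2 v - t • WithLp.toLp 2 u‖ ^ 2) 0 :=
    h.mono fun t ht => by
      simp only [enorm_eq_norm_toLp, WithLp.toLp_sub, WithLp.toLp_smul, zero_smul, sub_zero] at ht ⊢
      gcongr
  have hderiv := ((hasDerivAt_id (0 : ℝ)).smul_const (WithLp.toLp 2 u)).const_sub (WithLp.toLp 2 v)
  have := hsq.hasDerivAt_eq_zero hderiv.norm_sq
  simpa [EuclideanSpace.inner_eq_star_dotProduct, dotProduct_comm] using this

lemma pos_of_enorm_sub_one_lt_one {v : ι → ℝ} (h : _root_.enorm (v - 1) < 1) (i : ι) : 0 < v i := by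
  have := (abs_apply_le_enorm (v - 1) i).trans_lt h
  rw [Pi.sub_apply, Pi.one_apply, abs_sub_lt_iff] at this
  linarith

lemma enorm_le_sqrt_card_add_enorm_sub_one (v : ι → ℝ) :
    _root_.enorm v ≤ √(Fintype.card ι) + _root_.enorm (v - 1) := by
  rw [← enorm_one_eq_sqrt_card]
  convert enorm_add_le' 1 (v - 1)
  abel

end EuclideanNorm

section Proximity

variable {m n : ℕ} {A : Matrix (Fin m) (Fin n) ℝ} {c x : Fin n → ℝ} {μ : ℝ}
  {y : Fin m → ℝ} {s : Fin n → ℝ}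

lemma proxMin_le (hfeas : Aᵀ *ᵥ y + s = c) (hs : ∀ i, 0 ≤ s i) :
    proxMin A c x μ ≤ _root_.enorm (μ⁻¹ • (diagonal x *ᵥ s) - 1) :=
  csInf_le ⟨0, by rintro _ ⟨_, _, _, _, rfl⟩; exact enorm_nonneg _⟩ ⟨y, s, hfeas, hs, rfl⟩

lemma proxMin_eq_of_forall_le (hfeas : Aᵀ *ᵥ y + s = c) (hs : ∀ i, 0 ≤ s i)
    (hmin : ∀ (y' : Fin m → ℝ) (s' : Fin n → ℝ), Aᵀ *ᵥ y' + s' = c → (∀ i, 0 ≤ s' i) →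
      _root_.enorm (μ⁻¹ • (diagonal x *ᵥ s) - 1) ≤ _root_.enorm (μ⁻¹ • (diagonal x *ᵥ s') - 1)) :
    proxMin A c x μ = _root_.enorm (μ⁻¹ • (diagonal x *ᵥ s) - 1) :=
  (proxMin_le hfeas hs).antisymm <| le_csInf ⟨_, y, s, hfeas, hs, rfl⟩ <| by
    rintro _ ⟨y', s', hfeas', hs', rfl⟩
    exact hmin y' s' hfeas' hs'

lemma mulVec_diagonal_sub_one_eq_zero_of_forall_le (hμ : μ ≠ 0)
    (hfeas : Aᵀ *ᵥ y + s = c) (hs : ∀ i, 0 < s i)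
    (hmin : ∀ (y' : Fin m → ℝ) (s' : Fin n → ℝ), Aᵀ *ᵥ y' + s' = c → (∀ i, 0 ≤ s' i) →
      _root_.enorm (μ⁻¹ • (diagonal x *ᵥ s) - 1) ≤ _root_.enorm (μ⁻¹ • (diagonal x *ᵥ s') - 1)) :
    A *ᵥ (diagonal x *ᵥ (μ⁻¹ • (diagonal x *ᵥ s) - 1)) = 0 := by
  set z := μ⁻¹ • (diagonal x *ᵥ s)
  set g := A *ᵥ (diagonal x *ᵥ (z - 1)) with hg
  set w := Aᵀ *ᵥ g with hw
  have hpos : ∀ᶠ t in 𝓝 (0 : ℝ), ∀ i, 0 ≤ (s - t • w) i := eventually_all.2 fun i => by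
    have hcont : Continuous fun t : ℝ => s i - t * w i := by fun_prop
    filter_upwards [(hcont.tendsto' 0 (s i) (by simp)).eventually (lt_mem_nhds (hs i))] with t ht
    simpa using ht.le
  have hloc :
      IsLocalMin (fun t : ℝ => _root_.enorm ((z - 1) - t • (μ⁻¹ • (diagonal x *ᵥ w)))) 0 := by
    filter_upwards [hpos] with t ht
    have hfeas' : Aᵀ *ᵥ (y + t • g) + (s - t • w) = c := by
      rw [mulVec_add, mulVec_smul, ← hfeas]; abel
    have hz' : μ⁻¹ • (diagonal x *ᵥ (s - t • w)) - 1
        = (z - 1) - t • (μ⁻¹ • (diagonal x *ᵥ w)) := by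
      rw [mulVec_sub, mulVec_smul]; module
    simpa [hz'] using hmin _ _ hfeas' ht
  have hgg : μ⁻¹ * (g ⬝ᵥ g) = 0 := by
    have hsymm : (z - 1) ᵥ* diagonal x = diagonal x *ᵥ (z - 1) := by
      rw [← vecMul_transpose, diagonal_transpose]
    clear_value z g w
    rw [← dotProduct_eq_zero_of_isLocalMin_enorm_sub hloc, hw, dotProduct_smul, smul_eq_mul,
      dotProduct_mulVec, hsymm, dotProduct_mulVec, vecMul_transpose, ← hg]
  exact dotProduct_self_eq_zero.1 ((mul_eq_zero.1 hgg).resolve_left (inv_ne_zero hμ))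

lemma pos_of_enorm_smul_diagonal_mulVec_sub_one_lt_one (hμ : 0 < μ) (hx : ∀ i, 0 < x i)
    (h : _root_.enorm (μ⁻¹ • (diagonal x *ᵥ s) - 1) < 1) (i : Fin n) : 0 < s i := by
  have hzi := pos_of_enorm_sub_one_lt_one h i
  rw [Pi.smul_apply, mulVec_diagonal, smul_eq_mul] at hzi
  exact pos_of_mul_pos_right (pos_of_mul_pos_right hzi (inv_pos.2 hμ).le) (hx i).le

end Proximity

lemma Matrix.isUnit_of_rank_eq_card {ι K : Type*} [Fintype ι] [DecidableEq ι] [Field K]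
    {M : Matrix ι ι K} (h : M.rank = Fintype.card ι) : IsUnit M := by
  refine mulVec_surjective_iff_isUnit.1 ?_
  rw [← coe_mulVecLin, ← LinearMap.range_eq_top]
  exact Submodule.eq_top_of_finrank_eq
    (by rw [← Matrix.rank, h, Module.finrank_fintype_fun_eq_card])

section NormalEquations

variable {m n : ℕ} {A : Matrix (Fin m) (Fin n) ℝ} {c x : Fin n → ℝ} {μ : ℝ}
  {y : Fin m → ℝ} {s : Fin n → ℝ}

lemma isUnit_mul_transpose_self_of_rank_eq {κ : Type*} [Fintype κ] {B : Matrix (Fin m) κ ℝ}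
    (h : B.rank = m) : IsUnit (B * Bᵀ) :=
  Matrix.isUnit_of_rank_eq_card (by rw [rank_self_mul_transpose, h, Fintype.card_fin])

lemma isUnit_mul_diagonal_sq_mul_transpose (hrank : A.rank = m) (hX : IsUnit (diagonal x)) :
    IsUnit (A * diagonal x ^ 2 * Aᵀ) := by
  have hM : A * diagonal x ^ 2 * Aᵀ = (A * diagonal x) * (A * diagonal x)ᵀ := by
    rw [transpose_mul, diagonal_transpose, sq, Matrix.mul_assoc, Matrix.mul_assoc, Matrix.mul_assoc]
  rw [hM]
  refine isUnit_mul_transpose_self_of_rank_eq ?_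
  rw [rank_mul_eq_left_of_isUnit_det _ _ ((isUnit_iff_isUnit_det _).1 hX), hrank]

lemma mul_diagonal_sq_mul_transpose_mulVec_smul_eq (hfeas : Aᵀ *ᵥ y + s = c)
    (hopt : A *ᵥ (diagonal x *ᵥ (μ⁻¹ • (diagonal x *ᵥ s) - 1)) = 0) :
    (A * diagonal x ^ 2 * Aᵀ) *ᵥ (μ⁻¹ • y) = μ⁻¹ • ((A * diagonal x ^ 2) *ᵥ c) - A *ᵥ x := by
  have hX1 : diagonal x *ᵥ 1 = x := by ext i; simp [mulVec_diagonal]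
  rw [mulVec_sub, mulVec_sub, mulVec_smul, hX1, sub_eq_zero] at hopt
  rw [← hfeas, mulVec_add, smul_add, ← hopt]
  simp only [mulVec_smul, mulVec_mulVec, sq, Matrix.mul_assoc]
  abel

end NormalEquations

section InexactStep

variable {m n : ℕ} {A : Matrix (Fin m) (Fin n) ℝ} {c x : Fin n → ℝ} {μ : ℝ}
  {y : Fin m → ℝ} {s : Fin n → ℝ}

lemma add_step_eq_diagonal_mulVec (hfeas : Aᵀ *ᵥ y + s = c) {v : Fin m → ℝ} {lam ψ : Fin n → ℝ}
    (hψ : diagonal x *ᵥ ψ = (diagonal x ^ 2 * Aᵀ) *ᵥ v + lam) :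
    x + (-(μ⁻¹ • (diagonal x ^ 2 *ᵥ c) - x) + (diagonal x ^ 2 * Aᵀ) *ᵥ (μ⁻¹ • y + v) + lam)
      = diagonal x *ᵥ ((2 : ℝ) • 1 - μ⁻¹ • (diagonal x *ᵥ s) + ψ) := by
  have hX1 : diagonal x *ᵥ 1 = x := by ext i; simp [mulVec_diagonal]
  rw [← hfeas]
  simp only [mulVec_add, mulVec_sub, mulVec_smul, hX1, hψ, mulVec_mulVec, sq]
  module

lemma mulVec_step_eq_zero (hrank : A.rank = m) {dhat ζ : Fin m → ℝ}
    (hdhat : (A * diagonal x ^ 2 * Aᵀ) *ᵥ dhat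
      = μ⁻¹ • ((A * diagonal x ^ 2) *ᵥ c) - A *ᵥ x + ζ) :
    A *ᵥ (-(μ⁻¹ • (diagonal x ^ 2 *ᵥ c) - x) + (diagonal x ^ 2 * Aᵀ) *ᵥ dhat
      + -((Aᵀ * (A * Aᵀ)⁻¹) *ᵥ ζ)) = 0 := by
  have hlam : A *ᵥ -((Aᵀ * (A * Aᵀ)⁻¹) *ᵥ ζ) = -ζ := by
    rw [mulVec_neg, mulVec_mulVec, ← Matrix.mul_assoc, mul_nonsing_inv _
      ((isUnit_iff_isUnit_det _).1 (isUnit_mul_transpose_self_of_rank_eq hrank)), one_mulVec]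
  rw [mulVec_add, mulVec_add, mulVec_mulVec, ← Matrix.mul_assoc, hdhat, hlam, mulVec_neg,
    mulVec_sub, mulVec_smul, mulVec_mulVec]
  abel

lemma proxMin_step_le (hfeas : Aᵀ *ᵥ y + s = c) (hs : ∀ i, 0 ≤ s i) (ψ : Fin n → ℝ) :
    proxMin A c (diagonal x *ᵥ ((2 : ℝ) • 1 - μ⁻¹ • (diagonal x *ᵥ s) + ψ)) μ
      ≤ _root_.enorm (μ⁻¹ • (diagonal x *ᵥ s) - 1) ^ 2
        + _root_.enorm (μ⁻¹ • (diagonal x *ᵥ s)) * _root_.enorm ψ := by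
  set z := μ⁻¹ • (diagonal x *ᵥ s)
  have hres : μ⁻¹ • (diagonal (diagonal x *ᵥ ((2 : ℝ) • 1 - z + ψ)) *ᵥ s) - 1
      = -((z - 1) * (z - 1)) + z * ψ := by
    ext i
    simp only [z, mulVec_diagonal, Pi.smul_apply, Pi.sub_apply, Pi.add_apply, Pi.mul_apply,
      Pi.neg_apply, Pi.one_apply, smul_eq_mul]
    ring
  calc proxMin A c _ μ ≤ _root_.enorm (-((z - 1) * (z - 1)) + z * ψ) := by
        rw [← hres]; exact proxMin_le hfeas hs
    _ ≤ _root_.enorm ((z - 1) * (z - 1)) + _root_.enorm (z * ψ) := by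
        simpa only [enorm_eq_norm_toLp, WithLp.toLp_neg, norm_neg]
          using enorm_add_le' (-((z - 1) * (z - 1))) (z * ψ)
    _ ≤ _root_.enorm (z - 1) ^ 2 + _root_.enorm z * _root_.enorm ψ := by
        rw [sq]; gcongr <;> exact enorm_mul_le _ _

end InexactStep

theorem stmt_12_general {m n : ℕ} (A : Matrix (Fin m) (Fin n) ℝ) (b : Fin m → ℝ) (c : Fin n → ℝ)
    -- Assumption A1: nonempty primal and dual interiors, full row rank
    (hrank : A.rank = m)
    (x : Fin n → ℝ) (hxfeas : A *ᵥ x = b) (hxpos : ∀ i, 0 < x i)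
    (μ : ℝ) (hμ : 0 < μ)
    (hδ : proxMin A c x μ ≤ 1 / 2)
    -- the projected dual solution s(x, μ) attaining δ(x, μ)
    (ysol : Fin m → ℝ) (ssol : Fin n → ℝ)
    (hsolfeas : Aᵀ *ᵥ ysol + ssol = c) (hsolnn : ∀ i, 0 ≤ ssol i)
    (hsolmin : ∀ (y' : Fin m → ℝ) (s' : Fin n → ℝ), Aᵀ *ᵥ y' + s' = c → (∀ i, 0 ≤ s' i) →
      _root_.enorm (μ⁻¹ • (Matrix.diagonal x *ᵥ ssol) - 1)
        ≤ _root_.enorm (μ⁻¹ • (Matrix.diagonal x *ᵥ s') - 1))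
    (zvec : Fin n → ℝ) (hzvec : zvec = μ⁻¹ • (Matrix.diagonal x *ᵥ ssol))
    -- inexact normal equation solve
    (ζx : Fin m → ℝ) (dhat : Fin m → ℝ)
    (hdhat : (A * Matrix.diagonal x ^ 2 * Aᵀ) *ᵥ dhat
      = μ⁻¹ • ((A * Matrix.diagonal x ^ 2) *ᵥ c) - A *ᵥ x + ζx)
    (lamx : Fin n → ℝ) (hlamx : lamx = -((Aᵀ * (A * Aᵀ)⁻¹) *ᵥ ζx))
    (Δxhat : Fin n → ℝ)
    (hΔxhat : Δxhat = -(μ⁻¹ • ((Matrix.diagonal x ^ 2) *ᵥ c) - x)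
      + (Matrix.diagonal x ^ 2 * Aᵀ) *ᵥ dhat + lamx)
    (xplus : Fin n → ℝ) (hxplus : xplus = x + Δxhat)
    (ψx : Fin n → ℝ)
    (hψx : ψx = (Matrix.diagonal x * Aᵀ * (A * Matrix.diagonal x ^ 2 * Aᵀ)⁻¹) *ᵥ ζx
      + (Matrix.diagonal x)⁻¹ *ᵥ lamx) :
    xplus = Matrix.diagonal x *ᵥ ((2 : ℝ) • (1 : Fin n → ℝ) - zvec + ψx) ∧
    A *ᵥ xplus = b ∧
    proxMin A c xplus μ
      ≤ Real.sqrt 2 * (proxMin A c x μ) ^ 2 + (Real.sqrt (2 * n) + 1) * _root_.enorm ψx := by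
  have hX : IsUnit (diagonal x) :=
    isUnit_diagonal.2 (Pi.isUnit_iff.2 fun i => (hxpos i).ne'.isUnit)
  have hδeq : proxMin A c x μ = _root_.enorm (zvec - 1) :=
    hzvec ▸ proxMin_eq_of_forall_le hsolfeas hsolnn hsolmin
  have hz1 : _root_.enorm (zvec - 1) ≤ 1 / 2 := hδeq ▸ hδ
  have hspos : ∀ i, 0 < ssol i := pos_of_enorm_smul_diagonal_mulVec_sub_one_lt_one hμ hxpos
    (hzvec ▸ hz1.trans_lt (by norm_num))
  have hopt := mulVec_diagonal_sub_one_eq_zero_of_forall_le hμ.ne' hsolfeas hspos hsolmin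
  have hM := nonsing_inv_mul _
    ((isUnit_iff_isUnit_det _).1 (isUnit_mul_diagonal_sq_mul_transpose hrank hX))
  have hdhat' : dhat = μ⁻¹ • ysol + (A * diagonal x ^ 2 * Aᵀ)⁻¹ *ᵥ ζx := by
    rw [← mul_diagonal_sq_mul_transpose_mulVec_smul_eq hsolfeas hopt] at hdhat
    rw [← one_mulVec dhat, ← hM, ← mulVec_mulVec, hdhat, mulVec_add, mulVec_mulVec, hM, one_mulVec]
  have hstep : xplus = diagonal x *ᵥ ((2 : ℝ) • 1 - zvec + ψx) := by
    rw [hxplus, hΔxhat, hdhat', hzvec]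
    refine add_step_eq_diagonal_mulVec hsolfeas ?_
    rw [hψx, mulVec_add, mulVec_mulVec, mulVec_mulVec,
      mul_nonsing_inv _ ((isUnit_iff_isUnit_det _).1 hX), one_mulVec, mulVec_mulVec,
      ← Matrix.mul_assoc, ← Matrix.mul_assoc, ← sq]
  refine ⟨hstep, ?_, ?_⟩
  · rw [hxplus, mulVec_add, hxfeas, hΔxhat, hlamx, mulVec_step_eq_zero hrank hdhat, add_zero]
  have hz : _root_.enorm zvec ≤ √(2 * n) + 1 := by
    refine (enorm_le_sqrt_card_add_enorm_sub_one zvec).trans ?_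
    rw [Fintype.card_fin]
    gcongr
    · linarith [Nat.cast_nonneg (α := ℝ) n]
    · linarith
  calc proxMin A c xplus μ
      ≤ _root_.enorm (zvec - 1) ^ 2 + _root_.enorm zvec * _root_.enorm ψx := by
        rw [hstep, hzvec]; exact proxMin_step_le hsolfeas hsolnn ψx
    _ ≤ √2 * proxMin A c x μ ^ 2 + (√(2 * n) + 1) * _root_.enorm ψx := by
        rw [hδeq]
        gcongr
        · exact le_mul_of_one_le_left (sq_nonneg _) (Real.one_le_sqrt.2 one_le_two)
        · exact enorm_nonneg _

/-- form of the inexact primal IPM iterate, its primal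
feasibility, and the induced proximity bound. -/
theorem stmt_12 {m n : ℕ} (A : Matrix (Fin m) (Fin n) ℝ) (b : Fin m → ℝ) (c : Fin n → ℝ)
    -- Assumption A1: nonempty primal and dual interiors, full row rank
    (hrank : A.rank = m)
    (hFp0 : ∃ x0 : Fin n → ℝ, A *ᵥ x0 = b ∧ ∀ i, 0 < x0 i)
    (hFd0 : ∃ (y0 : Fin m → ℝ) (s0 : Fin n → ℝ), Aᵀ *ᵥ y0 + s0 = c ∧ ∀ i, 0 < s0 i)
    (x : Fin n → ℝ) (hxfeas : A *ᵥ x = b) (hxpos : ∀ i, 0 < x i)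
    (μ : ℝ) (hμ : 0 < μ)
    (hδ : proxMin A c x μ ≤ 1 / 2)
    -- the projected dual solution s(x, μ) attaining δ(x, μ)
    (ysol : Fin m → ℝ) (ssol : Fin n → ℝ)
    (hsolfeas : Aᵀ *ᵥ ysol + ssol = c) (hsolnn : ∀ i, 0 ≤ ssol i)
    (hsolmin : ∀ (y' : Fin m → ℝ) (s' : Fin n → ℝ), Aᵀ *ᵥ y' + s' = c → (∀ i, 0 ≤ s' i) →
      _root_.enorm (μ⁻¹ • (Matrix.diagonal x *ᵥ ssol) - 1)
        ≤ _root_.enorm (μ⁻¹ • (Matrix.diagonal x *ᵥ s') - 1))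
    (zvec : Fin n → ℝ) (hzvec : zvec = μ⁻¹ • (Matrix.diagonal x *ᵥ ssol))
    -- inexact normal equation solve
    (ζx : Fin m → ℝ) (dhat : Fin m → ℝ)
    (hdhat : (A * Matrix.diagonal x ^ 2 * Aᵀ) *ᵥ dhat
      = μ⁻¹ • ((A * Matrix.diagonal x ^ 2) *ᵥ c) - A *ᵥ x + ζx)
    (lamx : Fin n → ℝ) (hlamx : lamx = -((Aᵀ * (A * Aᵀ)⁻¹) *ᵥ ζx))
    (Δxhat : Fin n → ℝ)
    (hΔxhat : Δxhat = -(μ⁻¹ • ((Matrix.diagonal x ^ 2) *ᵥ c) - x)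
      + (Matrix.diagonal x ^ 2 * Aᵀ) *ᵥ dhat + lamx)
    (xplus : Fin n → ℝ) (hxplus : xplus = x + Δxhat)
    (ψx : Fin n → ℝ)
    (hψx : ψx = (Matrix.diagonal x * Aᵀ * (A * Matrix.diagonal x ^ 2 * Aᵀ)⁻¹) *ᵥ ζx
      + (Matrix.diagonal x)⁻¹ *ᵥ lamx) :
    xplus = Matrix.diagonal x *ᵥ ((2 : ℝ) • (1 : Fin n → ℝ) - zvec + ψx) ∧
    A *ᵥ xplus = b ∧
    proxMin A c xplus μ
      ≤ Real.sqrt 2 * (proxMin A c x μ) ^ 2 + (Real.sqrt (2 * n) + 1) * _root_.enorm ψx :=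
  stmt_12_general A b c hrank x hxfeas hxpos μ hμ hδ ysol ssol hsolfeas hsolnn hsolmin zvec hzvec ζx
    dhat hdhat lamx hlamx Δxhat hΔxhat xplus hxplus ψx hψx
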